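/- Let D be the derivation on ℚ[x,y,z] with D(x) = D(y) = D(z) = xyz. Then for all n ≥ 1, D^n(x) equals the trivariate second-order Eulerian polynomial C_n(x,y,z) = Σ_{σ ∈ Q_n} x^{asc(σ)} y^{plat(σ)} z^{des(σ)}. -/

import Mathlib

/-- A Stirling permutation of the multiset {1,1,2,2,...,n,n}. -/
def IsStirling (n : ℕ) (σ : List ℕ) : Prop :=
  (∀ m : ℕ, σ.count m = if 1 ≤ m ∧ m ≤ n then 2 else 0) ∧
  (∀ i s j : ℕ, i < s → s < j → j < σ.length →
    σ.getD i 0 = σ.getD j 0 → σ.getD i 0 < σ.getD s 0)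

/-- Entry of `σ` in 1-based indexing, with the boundary convention
`σ_0 = 0` and `σ_i = 0` for `i > length σ`. -/
def ent (σ : List ℕ) (i : ℕ) : ℕ := if i = 0 then 0 else σ.getD (i - 1) 0

/-- Number of ascents: indices `1 ≤ i ≤ 2n` with `σ_{i-1} < σ_i`. -/
def ascQ (σ : List ℕ) : ℕ :=
  ((Finset.Icc 1 σ.length).filter fun i => ent σ (i - 1) < ent σ i).card

/-- Number of plateaux: indices `1 ≤ i ≤ 2n-1` with `σ_i = σ_{i+1}`. -/
def platQ (σ : List ℕ) : ℕ :=
  ((Finset.Icc 1 (σ.length - 1)).filter fun i => ent σ i = ent σ (i + 1)).card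

/-- Number of descents: indices `1 ≤ i ≤ 2n` with `σ_i > σ_{i+1}` (with `σ_{2n+1} = 0`). -/
def desQ (σ : List ℕ) : ℕ :=
  ((Finset.Icc 1 σ.length).filter fun i => ent σ (i + 1) < ent σ i).card


open MvPolynomial

/-- The trivariate second-order Eulerian polynomial
`C_n(x,y,z) = Σ_{σ ∈ Q_n} x^{asc σ} y^{plat σ} z^{des σ}`, with variables
`x = X 0`, `y = X 1`, `z = X 2`. -/
noncomputable def Cpoly (n : ℕ) : MvPolynomial (Fin 3) ℚ :=
  ∑ᶠ σ ∈ {σ : List ℕ | IsStirling n σ},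
    (X 0 : MvPolynomial (Fin 3) ℚ) ^ ascQ σ * X 1 ^ platQ σ * X 2 ^ desQ σ

/-!
Every Stirling permutation of `{1,1,…,n+1,n+1}` arises from exactly one of `{1,1,…,n,n}` by
inserting the adjacent pair `(n+1)(n+1)` into one of its `2n+1` gaps. Label each gap `x`, `y`
or `z` according as it is an ascent, a plateau or a descent (with the boundary zeros); the
monomial `x^asc y^plat z^des` of a permutation is then the product of its gap labels. Inserting
the pair into a gap labelled `u` replaces that gap by an ascent, a plateau and a descent, i.e.
replaces the factor `u` by `xyz`; and since `D u = xyz` for every variable, the Leibniz rule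
turns the product of labels into the sum of these replacements over all gaps. Hence
`D C_n = C_{n+1}`. The recursion starts at the empty permutation, whose only gap is the
plateau `0 = 0`, i.e. at `y`, and `D y = D x`.
-/

namespace List

variable {α : Type*}

def insertPair (l : List α) (j : ℕ) (a : α) : List α := l.take j ++ a :: a :: l.drop j

variable {l : List α} {j : ℕ} {a : α}

theorem insertPair_perm (l : List α) (j : ℕ) (a : α) : l.insertPair j a ~ a :: a :: l := by
  calc l.insertPair j a ~ a :: (l.take j ++ a :: l.drop j) := perm_middle
    _ ~ a :: a :: (l.take j ++ l.drop j) := perm_middle.cons a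
    _ = a :: a :: l := by rw [take_append_drop]

theorem length_insertPair (l : List α) (j : ℕ) (a : α) :
    (l.insertPair j a).length = l.length + 2 :=
  (insertPair_perm l j a).length_eq

theorem getD_insertPair (hj : j ≤ l.length) (m : ℕ) (d : α) :
    (l.insertPair j a).getD m d =
      if m < j then l.getD m d else if m < j + 2 then a else l.getD (m - 2) d := by
  have hlen : (l.take j).length = j := length_take_of_le hj
  simp only [insertPair, getD_eq_getElem?_getD]
  split_ifs with h₁ h₂
  · rw [getElem?_append_left (by omega), getElem?_take_of_lt h₁]
  · rw [getElem?_append_right (by omega), hlen]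
    obtain rfl | rfl : m = j ∨ m = j + 1 := by omega
    all_goals simp
  · rw [getElem?_append_right (by omega), hlen, show m - j = m - 2 - j + 2 by omega]
    simp [show j + (m - 2 - j) = m - 2 by omega]

theorem idxOf_insertPair [BEq α] [LawfulBEq α] (ha : a ∉ l) (hj : j ≤ l.length) :
    (l.insertPair j a).idxOf a = j := by
  rw [insertPair, idxOf_append_of_notMem (fun h => ha (mem_of_mem_take h)), idxOf_cons_self,
    length_take_of_le hj, Nat.add_zero]

theorem take_append_drop_insertPair (hj : j ≤ l.length) :
    (l.insertPair j a).take j ++ (l.insertPair j a).drop (j + 2) = l := by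
  have hlen : (l.take j).length = j := length_take_of_le hj
  rw [insertPair, take_left' hlen, drop_append, hlen, drop_eq_nil_of_le (by omega)]
  simp

theorem insertPair_inj [BEq α] [LawfulBEq α] {l' : List α} {j' : ℕ} (ha : a ∉ l)
    (ha' : a ∉ l') (hj : j ≤ l.length) (hj' : j' ≤ l'.length)
    (h : l.insertPair j a = l'.insertPair j' a) :
    l = l' ∧ j = j' := by
  obtain rfl : j = j' := by rw [← idxOf_insertPair ha hj, h, idxOf_insertPair ha' hj']
  refine ⟨?_, rfl⟩
  rw [← take_append_drop_insertPair hj, h, take_append_drop_insertPair hj']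

end List

open Finset

section Gaps

variable {σ : List ℕ} {i j k v : ℕ}

@[simp]
theorem ent_zero (σ : List ℕ) : ent σ 0 = 0 := rfl

theorem ent_eq_getD_cons (σ : List ℕ) (i : ℕ) : ent σ i = (0 :: σ).getD i 0 := by
  cases i <;> simp [ent]

theorem ent_eq_zero_of_length_lt (h : σ.length < i) : ent σ i = 0 := by
  rw [ent_eq_getD_cons, List.getD_eq_default _ _ (by simpa)]

theorem ent_pos (h0 : 0 ∉ σ) (h1 : 1 ≤ i) (h2 : i ≤ σ.length) : 0 < ent σ i := by
  rw [ent, if_neg (by omega), List.getD_eq_getElem _ _ (by omega)]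
  exact Nat.pos_of_ne_zero fun h => h0 (h ▸ List.getElem_mem _)

theorem ent_insertPair (hj : j ≤ σ.length) (k : ℕ) :
    ent (σ.insertPair j v) k =
      if k ≤ j then ent σ k else if k ≤ j + 2 then v else ent σ (k - 2) := by
  rw [ent_eq_getD_cons, show 0 :: σ.insertPair j v = (0 :: σ).insertPair (j + 1) v from rfl,
    List.getD_insertPair (by simpa), ent_eq_getD_cons, ent_eq_getD_cons]
  split_ifs <;> first | rfl | omega

def gapVar (σ : List ℕ) (k : ℕ) : Fin 3 :=
  if ent σ k < ent σ (k + 1) then 0 else if ent σ k = ent σ (k + 1) then 1 else 2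

theorem gapVar_eq_zero_iff : gapVar σ k = 0 ↔ ent σ k < ent σ (k + 1) := by
  unfold gapVar; split_ifs <;> simp <;> omega

theorem gapVar_eq_one_iff : gapVar σ k = 1 ↔ ent σ k = ent σ (k + 1) := by
  unfold gapVar; split_ifs <;> simp <;> omega

theorem gapVar_eq_two_iff : gapVar σ k = 2 ↔ ent σ (k + 1) < ent σ k := by
  unfold gapVar; split_ifs <;> simp <;> omega

theorem gapVar_congr {τ : List ℕ} {k' : ℕ} (h : ent τ k = ent σ k')
    (h₁ : ent τ (k + 1) = ent σ (k' + 1)) : gapVar τ k = gapVar σ k' := by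
  rw [gapVar, gapVar, h, h₁]

theorem gapVar_insertPair_of_lt (hj : j ≤ σ.length) (hk : k < j) :
    gapVar (σ.insertPair j v) k = gapVar σ k :=
  gapVar_congr (by rw [ent_insertPair hj, if_pos (by omega)])
    (by rw [ent_insertPair hj, if_pos (by omega)])

theorem gapVar_insertPair_self (hj : j ≤ σ.length) (hv : ∀ i, ent σ i < v) :
    gapVar (σ.insertPair j v) j = 0 := by
  rw [gapVar_eq_zero_iff, ent_insertPair hj, ent_insertPair hj, if_pos le_rfl, if_neg (by omega),
    if_pos (by omega)]
  exact hv j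

theorem gapVar_insertPair_succ (hj : j ≤ σ.length) : gapVar (σ.insertPair j v) (j + 1) = 1 := by
  rw [gapVar_eq_one_iff, ent_insertPair hj, ent_insertPair hj, if_neg (by omega),
    if_pos (by omega), if_neg (by omega), if_pos (by omega)]

theorem gapVar_insertPair_add_two (hj : j ≤ σ.length) (hv : ∀ i, ent σ i < v) :
    gapVar (σ.insertPair j v) (j + 2) = 2 := by
  rw [gapVar_eq_two_iff, ent_insertPair hj, ent_insertPair hj, if_neg (by omega),
    if_neg (by omega), if_neg (by omega), if_pos (by omega), show j + 2 + 1 - 2 = j + 1 by omega]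
  exact hv (j + 1)

theorem gapVar_insertPair_add_three (hj : j ≤ σ.length) (k : ℕ) :
    gapVar (σ.insertPair j v) (j + 3 + k) = gapVar σ (j + 1 + k) := by
  refine gapVar_congr ?_ ?_ <;>
    rw [ent_insertPair hj, if_neg (by omega), if_neg (by omega)] <;> congr 1 <;> omega

theorem ascQ_eq_card_gapVar (σ : List ℕ) :
    ascQ σ = #{k ∈ range (σ.length + 1) | gapVar σ k = 0} := by
  unfold ascQ
  refine (card_nbij' (· + 1) (· - 1) (fun k hk => ?_) (fun i hi => ?_) (fun k _ => ?_)
    (fun i hi => ?_)).symm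
  all_goals simp only [mem_coe, mem_filter, mem_range, mem_Icc, gapVar_eq_zero_iff] at *
  · refine ⟨⟨by omega, Nat.le_of_lt_succ (lt_of_not_ge fun hL => ?_)⟩, by simpa using hk.2⟩
    have := hk.2
    rw [ent_eq_zero_of_length_lt (i := k + 1) (by omega)] at this
    omega
  · exact ⟨by omega, by simpa [Nat.sub_add_cancel hi.1.1] using hi.2⟩
  · simp
  · omega

theorem desQ_eq_card_gapVar (σ : List ℕ) :
    desQ σ = #{k ∈ range (σ.length + 1) | gapVar σ k = 2} := by
  unfold desQ
  congr 1
  ext k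
  simp only [mem_filter, mem_Icc, mem_range, gapVar_eq_two_iff]
  refine ⟨fun h => ⟨by omega, h.2⟩,
    fun h => ⟨⟨Nat.one_le_iff_ne_zero.2 ?_, by omega⟩, h.2⟩⟩
  rintro rfl
  simp at h

theorem platQ_eq_card_gapVar (hσ : σ ≠ []) (h0 : 0 ∉ σ) :
    platQ σ = #{k ∈ range (σ.length + 1) | gapVar σ k = 1} := by
  have hL : 0 < σ.length := List.length_pos_iff.2 hσ
  unfold platQ
  congr 1
  ext k
  simp only [mem_filter, mem_Icc, mem_range, gapVar_eq_one_iff]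
  refine ⟨fun h => ⟨by omega, h.2⟩, fun h => ⟨⟨?_, ?_⟩, h.2⟩⟩
  · by_contra hk
    have := ent_pos h0 (le_refl 1) hL
    rw [show k = 0 by omega, ent_zero, zero_add] at h
    omega
  · by_contra hk
    have := ent_pos h0 (i := k) (by omega) (by omega)
    rw [ent_eq_zero_of_length_lt (i := k + 1) (by omega)] at h
    omega

end Gaps

theorem Derivation.map_prod_of_map_eq_mul {R A ι : Type*} [CommSemiring R] [CommSemiring A]
    [Algebra R A] (D : Derivation R A A) (s : Finset ι) {f g : ι → A}
    (h : ∀ i ∈ s, D (f i) = f i * g i) :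
    D (∏ i ∈ s, f i) = (∏ i ∈ s, f i) * ∑ i ∈ s, g i := by
  classical
  induction s using Finset.induction_on with
  | empty => simp
  | insert a s ha ih =>
    rw [prod_insert ha, sum_insert ha, D.leibniz, ih fun i hi => h i (mem_insert_of_mem hi),
      h a (mem_insert_self a s), smul_eq_mul, smul_eq_mul]
    ring

section GapMonomial

variable (R : Type*) [CommSemiring R]

noncomputable def gapMonomial (σ : List ℕ) : MvPolynomial (Fin 3) R :=
  ∏ k ∈ range (σ.length + 1), X (gapVar σ k)

variable {R} {σ : List ℕ} {j v : ℕ}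

theorem gapMonomial_eq (hσ : σ ≠ []) (h0 : 0 ∉ σ) :
    gapMonomial R σ = X 0 ^ ascQ σ * X 1 ^ platQ σ * X 2 ^ desQ σ := by
  have fiber (i : Fin 3) : ∏ k ∈ range (σ.length + 1) with gapVar σ k = i,
      (X (gapVar σ k) : MvPolynomial (Fin 3) R) =
        X i ^ #{k ∈ range (σ.length + 1) | gapVar σ k = i} :=
    prod_eq_pow_card fun k hk => by rw [(mem_filter.1 hk).2]
  rw [gapMonomial, ← prod_fiberwise _ (gapVar σ), Fin.prod_univ_three, fiber, fiber, fiber,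
    ascQ_eq_card_gapVar, platQ_eq_card_gapVar hσ h0, desQ_eq_card_gapVar]

theorem gapMonomial_insertPair (hj : j ≤ σ.length) (hv : ∀ i, ent σ i < v) :
    gapMonomial R (σ.insertPair j v) =
      gapMonomial R σ * ∏ i ∈ univ.erase (gapVar σ j), X i := by
  have before : ∏ k ∈ range j, (X (gapVar (σ.insertPair j v) k) : MvPolynomial (Fin 3) R) =
      ∏ k ∈ range j, X (gapVar σ k) :=
    prod_congr rfl fun k hk => by rw [gapVar_insertPair_of_lt hj (mem_range.1 hk)]
  have after : ∏ k ∈ range (σ.length - j),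
      (X (gapVar (σ.insertPair j v) (j + 3 + k)) : MvPolynomial (Fin 3) R) =
      ∏ k ∈ range (σ.length - j), X (gapVar σ (j + 1 + k)) :=
    prod_congr rfl fun k _ => by rw [gapVar_insertPair_add_three hj]
  rw [gapMonomial, gapMonomial, List.length_insertPair,
    show σ.length + 2 + 1 = j + 3 + (σ.length - j) by omega,
    show σ.length + 1 = j + 1 + (σ.length - j) by omega, prod_range_add _ (j + 3),
    prod_range_add _ (j + 1), prod_range_succ _ (j + 2), prod_range_succ _ (j + 1),
    prod_range_succ _ j, prod_range_succ _ j, before, after, gapVar_insertPair_self hj hv,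
    gapVar_insertPair_succ hj, gapVar_insertPair_add_two hj hv]
  calc _ = (∏ k ∈ range j, X (gapVar σ k)) *
        (∏ k ∈ range (σ.length - j), X (gapVar σ (j + 1 + k))) *
        ∏ i, (X i : MvPolynomial (Fin 3) R) := by rw [Fin.prod_univ_three]; ring
    _ = _ := by rw [← mul_prod_erase univ X (mem_univ (gapVar σ j))]; ring

theorem derivation_gapMonomial {D : Derivation R (MvPolynomial (Fin 3) R) (MvPolynomial (Fin 3) R)}
    (hD : ∀ i : Fin 3, D (X i) = X 0 * X 1 * X 2) (hv : ∀ i, ent σ i < v) :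
    D (gapMonomial R σ) = ∑ j ∈ range (σ.length + 1), gapMonomial R (σ.insertPair j v) := by
  rw [gapMonomial, D.map_prod_of_map_eq_mul _ fun k _ => ?_, ← gapMonomial, mul_sum]
  · exact sum_congr rfl fun j hj =>
      (gapMonomial_insertPair (Nat.le_of_lt_succ (mem_range.1 hj)) hv).symm
  · rw [hD, mul_prod_erase _ _ (mem_univ _), Fin.prod_univ_three]

end GapMonomial

namespace IsStirling

variable {n j : ℕ} {σ τ : List ℕ}

theorem mem_iff (h : IsStirling n σ) {x : ℕ} : x ∈ σ ↔ 1 ≤ x ∧ x ≤ n := by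
  rw [← List.count_pos_iff, h.1]
  split_ifs <;> simp_all

theorem zero_notMem (h : IsStirling n σ) : 0 ∉ σ := fun h0 => by
  have := h.mem_iff.1 h0
  omega

theorem succ_notMem (h : IsStirling n σ) : n + 1 ∉ σ := fun hv => by
  have := h.mem_iff.1 hv
  omega

theorem perm (h : IsStirling n σ) : σ.Perm (List.range' 1 n ++ List.range' 1 n) :=
  List.perm_iff_count.2 fun m => by
    rw [h.1, List.count_append, List.count_range_1']
    split_ifs <;> omega

theorem length_eq (h : IsStirling n σ) : σ.length = 2 * n := by
  simp [h.perm.length_eq, two_mul]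

theorem getD_le (h : IsStirling n σ) (i : ℕ) : σ.getD i 0 ≤ n := by
  rcases lt_or_ge i σ.length with hi | hi
  · rw [List.getD_eq_getElem _ _ hi]
    exact (h.mem_iff.1 (List.getElem_mem hi)).2
  · rw [List.getD_eq_default _ _ hi]
    exact Nat.zero_le n

theorem ent_le (h : IsStirling n σ) (i : ℕ) : ent σ i ≤ n := by
  unfold ent
  split_ifs
  exacts [Nat.zero_le n, h.getD_le _]

theorem insertPair (h : IsStirling n σ) (hj : j ≤ σ.length) :
    IsStirling (n + 1) (σ.insertPair j (n + 1)) := by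
  refine ⟨fun m => ?_, fun i s k his hsk hk heq => ?_⟩
  · rw [(σ.insertPair_perm j (n + 1)).count_eq, List.count_cons, List.count_cons, h.1]
    simp only [beq_iff_eq]
    split_ifs <;> omega
  have key : ∀ m, (m = j ∨ m = j + 1) ∧ (σ.insertPair j (n + 1)).getD m 0 = n + 1 ∨
      ∃ m', (m < j ∧ m' = m ∨ j + 2 ≤ m ∧ m' + 2 = m) ∧
        (σ.insertPair j (n + 1)).getD m 0 = σ.getD m' 0 ∧ σ.getD m' 0 ≤ n := by
    intro m
    rw [List.getD_insertPair hj]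
    split_ifs
    · exact .inr ⟨m, .inl ⟨by omega, rfl⟩, rfl, h.getD_le m⟩
    · exact .inl ⟨by omega, rfl⟩
    · exact .inr ⟨m - 2, .inr ⟨by omega, by omega⟩, rfl, h.getD_le _⟩
  rw [List.length_insertPair] at hk
  -- an old value never equals `n + 1`, and the two new positions are adjacent
  rcases key i with ⟨hi, hi'⟩ | ⟨i', hi, hi', hi''⟩ <;>
    rcases key s with ⟨hs, hs'⟩ | ⟨s', hs, hs', hs''⟩ <;>
    rcases key k with ⟨hk, hk'⟩ | ⟨k', hk, hk', hk''⟩ <;> try omega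
  have := h.2 i' s' k' (by omega) (by omega) (by omega) (by omega)
  omega

theorem of_insertPair (h : IsStirling (n + 1) (σ.insertPair j (n + 1))) (hj : j ≤ σ.length) :
    IsStirling n σ := by
  refine ⟨fun m => ?_, fun i s k his hsk hk heq => ?_⟩
  · have := h.1 m
    rw [(σ.insertPair_perm j (n + 1)).count_eq, List.count_cons, List.count_cons] at this
    simp only [beq_iff_eq] at this
    split_ifs at this ⊢ <;> omega
  have key : ∀ m, ∃ m', (m < j ∧ m' = m ∨ j ≤ m ∧ m' = m + 2) ∧
      (σ.insertPair j (n + 1)).getD m' 0 = σ.getD m 0 := by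
    intro m
    by_cases hm : m < j
    · exact ⟨m, .inl ⟨hm, rfl⟩, by rw [List.getD_insertPair hj, if_pos hm]⟩
    · refine ⟨m + 2, .inr ⟨by omega, rfl⟩, ?_⟩
      rw [List.getD_insertPair hj, if_neg (by omega), if_neg (by omega), Nat.add_sub_cancel]
  obtain ⟨i', hi, hi'⟩ := key i
  obtain ⟨s', hs, hs'⟩ := key s
  obtain ⟨k', hk', hk''⟩ := key k
  rw [← hi', ← hk''] at heq
  rw [← hi', ← hs']
  exact h.2 i' s' k' (by omega) (by omega) (by rw [List.length_insertPair]; omega) heq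

theorem exists_eq_insertPair (h : IsStirling (n + 1) τ) :
    ∃ (σ : List ℕ) (j : ℕ), j ≤ σ.length ∧ τ = σ.insertPair j (n + 1) := by
  obtain ⟨A, B', hA, rfl, -⟩ := List.exists_erase_eq (h.mem_iff.2 ⟨by omega, le_rfl⟩)
  have hB' : n + 1 ∈ B' := by
    have := h.1 (n + 1)
    rw [if_pos (by omega), List.count_append, List.count_cons_self,
      List.count_eq_zero_of_not_mem hA] at this
    exact List.count_pos_iff.1 (by omega)
  obtain ⟨C, B, rfl⟩ := List.append_of_mem hB'
  cases C with
  | nil => exact ⟨A ++ B, A.length, by simp, by simp [List.insertPair]⟩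
  | cons c C =>
    -- `c` sits between the two copies of `n + 1`, so it would have to exceed the maximum
    have hc := h.2 A.length (A.length + 1) (A.length + (C.length + 2)) (by omega) (by omega)
      (by simp) (by simp)
    have hc : n + 1 < c := by simpa using hc
    have := (h.mem_iff (x := c)).1 (by simp)
    omega

end IsStirling

theorem finite_setOf_isStirling (n : ℕ) : {σ | IsStirling n σ}.Finite :=
  (List.range' 1 n ++ List.range' 1 n).permutations.toFinset.finite_toSet.subset fun σ h => by
    simpa using h.perm

noncomputable def stirlingFinset (n : ℕ) : Finset (List ℕ) :=
  (finite_setOf_isStirling n).toFinset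

theorem mem_stirlingFinset {n : ℕ} {σ : List ℕ} :
    σ ∈ stirlingFinset n ↔ IsStirling n σ :=
  Set.Finite.mem_toFinset _

theorem stirlingFinset_zero : stirlingFinset 0 = {[]} := by
  ext σ
  rw [mem_stirlingFinset, mem_singleton]
  refine ⟨fun h => List.eq_nil_of_length_eq_zero h.length_eq, ?_⟩
  rintro rfl
  exact ⟨fun m => by rw [List.count_nil, if_neg (by omega)],
    fun i s k _ _ hk => absurd hk (Nat.not_lt_zero k)⟩

theorem sum_stirlingFinset_succ {M : Type*} [AddCommMonoid M] (n : ℕ) (f : List ℕ → M) :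
    ∑ τ ∈ stirlingFinset (n + 1), f τ =
      ∑ σ ∈ stirlingFinset n, ∑ j ∈ range (2 * n + 1), f (σ.insertPair j (n + 1)) := by
  rw [← sum_product']
  refine (sum_bij (fun p _ => p.1.insertPair p.2 (n + 1)) ?_ ?_ ?_ fun _ _ => rfl).symm
  · rintro ⟨σ, j⟩ hp
    rw [mem_product, mem_stirlingFinset, mem_range] at hp
    exact mem_stirlingFinset.2 (hp.1.insertPair (by rw [hp.1.length_eq]; omega))
  · rintro ⟨σ, j⟩ hp ⟨σ', j'⟩ hp' heq
    rw [mem_product, mem_stirlingFinset, mem_range] at hp hp'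
    obtain ⟨rfl, rfl⟩ := List.insertPair_inj hp.1.succ_notMem hp'.1.succ_notMem
      (by rw [hp.1.length_eq]; omega) (by rw [hp'.1.length_eq]; omega) heq
    rfl
  · intro τ hτ
    obtain ⟨σ, j, hj, rfl⟩ := (mem_stirlingFinset.1 hτ).exists_eq_insertPair
    have hσ := (mem_stirlingFinset.1 hτ).of_insertPair hj
    refine ⟨(σ, j), mem_product.2 ⟨mem_stirlingFinset.2 hσ, mem_range.2 ?_⟩, rfl⟩
    rw [← hσ.length_eq]
    omega

section Recursion

variable {R : Type*} [CommSemiring R]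
  {D : Derivation R (MvPolynomial (Fin 3) R) (MvPolynomial (Fin 3) R)}

theorem sum_gapMonomial_succ (hD : ∀ i : Fin 3, D (X i) = X 0 * X 1 * X 2) (n : ℕ) :
    ∑ τ ∈ stirlingFinset (n + 1), gapMonomial R τ =
      D (∑ σ ∈ stirlingFinset n, gapMonomial R σ) := by
  rw [sum_stirlingFinset_succ, map_sum]
  refine sum_congr rfl fun σ hσ => ?_
  rw [mem_stirlingFinset] at hσ
  rw [derivation_gapMonomial hD fun i => Nat.lt_succ_of_le (hσ.ent_le i), hσ.length_eq]

theorem sum_gapMonomial_eq_iterate (hD : ∀ i : Fin 3, D (X i) = X 0 * X 1 * X 2) (n : ℕ) :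
    ∑ σ ∈ stirlingFinset n, gapMonomial R σ = (fun p => D p)^[n] (X 1) := by
  induction n with
  | zero => simp [stirlingFinset_zero, gapMonomial, gapVar, ent]
  | succ n ih => rw [sum_gapMonomial_succ hD, ih, Function.iterate_succ_apply']

end Recursion

theorem Cpoly_eq_sum_gapMonomial {n : ℕ} (hn : n ≠ 0) :
    Cpoly n = ∑ σ ∈ stirlingFinset n, gapMonomial ℚ σ := by
  rw [Cpoly, finsum_mem_eq_finite_toFinset_sum _ (finite_setOf_isStirling n)]
  refine (sum_congr rfl fun σ hσ => ?_).symm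
  have hσ : IsStirling n σ := mem_stirlingFinset.1 hσ
  exact gapMonomial_eq (List.ne_nil_of_length_pos (by rw [hσ.length_eq]; omega)) hσ.zero_notMem

theorem derivation_iterate_eq_Cpoly
    (D : Derivation ℚ (MvPolynomial (Fin 3) ℚ) (MvPolynomial (Fin 3) ℚ))
    (hD : ∀ i : Fin 3, D (X i) = X 0 * X 1 * X 2) :
    ∀ n : ℕ, 1 ≤ n → (fun p => D p)^[n] (X 0) = Cpoly n := by
  rintro (_ | n) hn
  · omega
  · rw [Cpoly_eq_sum_gapMonomial n.succ_ne_zero, sum_gapMonomial_eq_iterate hD,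
      Function.iterate_succ_apply, Function.iterate_succ_apply, hD 0, hD 1]
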